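/- arXiv:0907.0283 — 2 statements merged into one kernel-verified Lean document; each statement's English description precedes it below -/
import Mathlib

section
/- Let φ be an ℓ-coloring of the k-subsets of {1,…,N} and consider the step-up coloring C of (k+1)-tuples of binary strings of length N: for ε₁ < ⋯ < ε_{k+1} with δ_i = δ(ε_i, ε_{i+1}), if δ₁,…,δ_k is monotone then C = φ({δ₁,…,δ_k}). If a set S of binary strings of size n+1 is monochromatic under C in a color j that C assigns only to tuples with monotone δ-sequences, then {1,…,N} contains a monochromatic n-set in color j under φ. In particular, writing S = {ε₁ < ⋯ < ε_{n+1}}, if δ(ε_1,ε_2),…,δ(ε_n,ε_{n+1}) is monotone, then {δ(ε_1,ε_2),…,δ(ε_n,ε_{n+1})} is a monochromatic set under φ in color j. -/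
/-- Binary value of a binary string of length `N`. -/
def bval {N : ℕ} (ε : Fin N → Bool) : ℕ :=
  ∑ i : Fin N, if ε i then 2 ^ (i : ℕ) else 0

/-- The largest coordinate at which two binary strings differ
(as a natural number; `0` if they agree everywhere). -/
def delta {N : ℕ} (ε ε' : Fin N → Bool) : ℕ :=
  (Finset.univ.filter fun i : Fin N => ε i ≠ ε' i).sup fun i => (i : ℕ)

/-- Monotone (strictly increasing or strictly decreasing) sequence of
consecutive `δ`'s of `ε 0 < ε 1 < ⋯ < ε n`. -/
def DeltaMonotone {N : ℕ} (ε : ℕ → (Fin N → Bool)) (n : ℕ) : Prop :=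
  (∀ i : ℕ, i + 1 < n → delta (ε i) (ε (i + 1)) < delta (ε (i + 1)) (ε (i + 2))) ∨
  (∀ i : ℕ, i + 1 < n → delta (ε (i + 1)) (ε (i + 2)) < delta (ε i) (ε (i + 1)))

/-!
In binary order, `x < y < z` forces `δ(x,y) ≠ δ(y,z)` (bit `δ(x,y)` of `y` is `1`, bit `δ(y,z)`
of `y` is `0`), and then `δ(x,z) = max (δ(x,y), δ(y,z))`. Along the chain `ε 0 < ⋯ < ε n`,
`δ(ε a, ε b)` is therefore the largest consecutive `δᵢ` with `a ≤ i < b`: it is `δ_{b-1}` when the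
`δᵢ` increase and `δ_a` when they decrease. So for indices `i₁ < ⋯ < i_k` the chain
`0, i₁+1, …, i_k+1` (increasing case), resp. `i₁, …, i_k, n` (decreasing case), has δ-set
exactly `{δ_{i₁}, …, δ_{i_k}}`. Monotonicity also makes the `δᵢ` distinct.
-/

open Finset

section BinaryString

variable {N : ℕ} {x y z : Fin N → Bool}

lemma delta_comm (x y : Fin N → Bool) : delta x y = delta y x := by
  simp only [delta, ne_comm]

lemma le_delta_of_ne {i : Fin N} (h : x i ≠ y i) : (i : ℕ) ≤ delta x y :=
  le_sup (f := fun i : Fin N => (i : ℕ)) (by simpa using h)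

lemma eq_of_delta_lt {i : Fin N} (h : delta x y < i) : x i = y i :=
  not_not.1 fun hne => (le_delta_of_ne hne).not_gt h

lemma delta_le {d : ℕ} (h : ∀ i : Fin N, x i ≠ y i → (i : ℕ) ≤ d) : delta x y ≤ d :=
  Finset.sup_le fun i hi => h i (by simpa using hi)

lemma exists_eq_delta (h : x ≠ y) : ∃ i : Fin N, (i : ℕ) = delta x y ∧ x i ≠ y i := by
  have hne : (univ.filter fun i : Fin N => x i ≠ y i).Nonempty := by
    obtain ⟨i, hi⟩ := Function.ne_iff.1 h
    exact ⟨i, by simpa using hi⟩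
  obtain ⟨i, hi, hsup⟩ := exists_mem_eq_sup _ hne fun i : Fin N => (i : ℕ)
  exact ⟨i, hsup.symm, by simpa using hi⟩

lemma delta_eq_of_delta_lt (h : delta x y < delta y z) : delta x z = delta y z := by
  obtain ⟨i, hi, hyz⟩ := exists_eq_delta fun hyz : y = z => by simp [hyz, delta] at h
  apply le_antisymm
  · refine delta_le fun j hxz => not_lt.1 fun hj : delta y z < j => hxz ?_
    have hxy : x j = y j := eq_of_delta_lt (h.trans hj)
    have hyz : y j = z j := eq_of_delta_lt hj
    exact hxy.trans hyz
  · have hxi : x i = y i := eq_of_delta_lt (h.trans_eq hi.symm)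
    exact hi ▸ le_delta_of_ne (hxi ▸ hyz)

lemma delta_eq_max_of_ne (h : delta x y ≠ delta y z) :
    delta x z = max (delta x y) (delta y z) := by
  rcases h.lt_or_gt with h | h
  · rw [max_eq_right h.le, delta_eq_of_delta_lt h]
  · rw [max_eq_left h.le, delta_comm x z, delta_comm x y]
    exact delta_eq_of_delta_lt (by rwa [delta_comm z y, delta_comm y x])

def bitSet (x : Fin N → Bool) : Finset ℕ :=
  (univ.filter fun i => x i = true).map Fin.valEmbedding

lemma val_mem_bitSet {i : Fin N} : (i : ℕ) ∈ bitSet x ↔ x i = true := by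
  simp [bitSet, Fin.val_inj]

lemma bval_eq_sum_bitSet (x : Fin N → Bool) : bval x = ∑ i ∈ bitSet x, 2 ^ i := by
  simp [bval, bitSet, sum_filter]

/-- Binary values compare as bit sets in colex order, i.e. by the top differing bit. -/
lemma exists_delta_of_bval_lt (h : bval x < bval y) :
    ∃ i : Fin N, (i : ℕ) = delta x y ∧ x i = false ∧ y i = true := by
  rw [bval_eq_sum_bitSet, bval_eq_sum_bitSet,
    geomSum_lt_geomSum_iff_toColex_lt_toColex le_rfl,
    Colex.toColex_lt_toColex_iff_exists_forall_lt] at h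
  obtain ⟨a, hya, hxa, hmax⟩ := h
  obtain ⟨a, -, rfl⟩ := mem_map.1 hya
  rw [Fin.valEmbedding_apply, val_mem_bitSet] at hya hxa
  obtain ⟨i, hi, hxy⟩ := exists_eq_delta fun hxy : x = y => hxa (hxy ▸ hya)
  refine ⟨i, hi, ?_⟩
  cases hxi : x i
  · exact ⟨rfl, by simpa [hxi] using hxy.symm⟩
  · have hyi : y i = false := by simpa [hxi] using hxy.symm
    have hia : (i : ℕ) < a := hmax i (val_mem_bitSet.2 hxi) (by simp [val_mem_bitSet, hyi])
    have hai : (a : ℕ) ≤ i := hi ▸ le_delta_of_ne (hya ▸ hxa)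
    omega

lemma delta_ne_of_bval_lt (hxy : bval x < bval y) (hyz : bval y < bval z) :
    delta x y ≠ delta y z := by
  obtain ⟨i, hi, -, hyi⟩ := exists_delta_of_bval_lt hxy
  obtain ⟨i', hi', hyi', -⟩ := exists_delta_of_bval_lt hyz
  intro h
  rw [Fin.ext (hi.trans (h.trans hi'.symm))] at hyi
  simp [hyi] at hyi'

end BinaryString

lemma Finset.image_nth_range_card (I : Finset ℕ) : (range #I).image (Nat.nth (· ∈ I)) = I := by
  have := Nat.image_nth_Iio_card (p := (· ∈ I)) I.finite_toSet
  simp only [Finset.finite_toSet_toFinset] at this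
  rw [← coe_inj, coe_image, coe_range]
  exact this

lemma Finset.nth_mem_of_lt_card {I : Finset ℕ} {m : ℕ} (hm : m < #I) :
    Nat.nth (· ∈ I) m ∈ I :=
  I.image_nth_range_card.subset (mem_image_of_mem _ (mem_range.2 hm))

lemma Finset.strictMonoOn_nth (I : Finset ℕ) :
    StrictMonoOn (Nat.nth (· ∈ I)) (Set.Iio #I) := by
  simpa using Nat.nth_strictMonoOn (p := (· ∈ I)) I.finite_toSet

section Chain

variable {N n : ℕ} {ε : ℕ → Fin N → Bool}

lemma DeltaMonotone.strictMonoOn_or_strictAntiOn (h : DeltaMonotone ε n) :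
    StrictMonoOn (fun i => delta (ε i) (ε (i + 1))) (Set.Iio n) ∨
      StrictAntiOn (fun i => delta (ε i) (ε (i + 1))) (Set.Iio n) := by
  refine h.imp (fun h => strictMonoOn_of_lt_succ Set.ordConnected_Iio fun a _ _ ha => ?_)
    (fun h => strictAntiOn_of_succ_lt Set.ordConnected_Iio fun a _ _ ha => ?_)
  · simpa using h a (by simpa using ha)
  · simpa using h a (by simpa using ha)

lemma DeltaMonotone.injOn (h : DeltaMonotone ε n) :
    Set.InjOn (fun i => delta (ε i) (ε (i + 1))) (range n) := by
  rw [coe_range]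
  exact h.strictMonoOn_or_strictAntiOn.elim StrictMonoOn.injOn StrictAntiOn.injOn

lemma delta_eq_max_of_lt_of_lt
    (hinc : ∀ a b : ℕ, a < b → b ≤ n → bval (ε a) < bval (ε b)) {a b c : ℕ}
    (hab : a < b) (hbc : b < c) (hc : c ≤ n) :
    delta (ε a) (ε c) = max (delta (ε a) (ε b)) (delta (ε b) (ε c)) :=
  delta_eq_max_of_ne <| delta_ne_of_bval_lt (hinc a b hab (by omega)) (hinc b c hbc hc)

lemma delta_eq_delta_last_of_strictMonoOn
    (hinc : ∀ a b : ℕ, a < b → b ≤ n → bval (ε a) < bval (ε b))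
    (hδ : StrictMonoOn (fun i => delta (ε i) (ε (i + 1))) (Set.Iio n))
    {a b : ℕ} (hab : a ≤ b) (hb : b < n) :
    delta (ε a) (ε (b + 1)) = delta (ε b) (ε (b + 1)) := by
  induction b, hab using Nat.le_induction with
  | base => rfl
  | succ b hab ih =>
    have hlt := hδ (show b < n by omega) hb (Nat.lt_succ_self b)
    rw [delta_eq_max_of_lt_of_lt hinc (b := b + 1) (by omega) (by omega) hb, ih (by omega)]
    exact max_eq_right hlt.le

lemma delta_eq_delta_first_of_strictAntiOn
    (hinc : ∀ a b : ℕ, a < b → b ≤ n → bval (ε a) < bval (ε b))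
    (hδ : StrictAntiOn (fun i => delta (ε i) (ε (i + 1))) (Set.Iio n))
    {a b : ℕ} (hab : a < b) (hb : b ≤ n) :
    delta (ε a) (ε b) = delta (ε a) (ε (a + 1)) := by
  induction b, hab using Nat.le_induction with
  | base => rfl
  | succ b hab ih =>
    have hlt := hδ (show a < n by omega) (show b < n by omega) hab
    rw [delta_eq_max_of_lt_of_lt hinc hab (Nat.lt_succ_self b) hb, ih (by omega)]
    exact max_eq_left hlt.le

lemma exists_chain_of_strictMonoOn
    (hinc : ∀ a b : ℕ, a < b → b ≤ n → bval (ε a) < bval (ε b))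
    (hδ : StrictMonoOn (fun i => delta (ε i) (ε (i + 1))) (Set.Iio n))
    {I : Finset ℕ} (hI : I ⊆ range n) :
    ∃ g : ℕ → ℕ, (∀ a b : ℕ, a < b → b ≤ #I → g a < g b) ∧ g #I ≤ n ∧
      (range #I).image (fun m => delta (ε (g m)) (ε (g (m + 1)))) =
        I.image fun i => delta (ε i) (ε (i + 1)) := by
  set E := Nat.nth (· ∈ I)
  have hEn : ∀ m < #I, E m < n := fun m hm => mem_range.1 <| hI <| nth_mem_of_lt_card hm
  have hE : ∀ a b, a < b → b < #I → E a < E b := fun a b hab hb =>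
    I.strictMonoOn_nth (hab.trans hb) hb hab
  refine ⟨fun m => if m = 0 then 0 else E (m - 1) + 1, fun a b hab hb => ?_, ?_, ?_⟩
  · have := hE (a - 1) (b - 1)
    dsimp only
    split_ifs <;> omega
  · have := hEn (#I - 1)
    dsimp only
    split_ifs <;> omega
  · conv_rhs => rw [← I.image_nth_range_card, image_image]
    refine image_congr fun m hm => ?_
    rw [coe_range, Set.mem_Iio] at hm
    simp only [Function.comp_apply, if_neg m.succ_ne_zero, Nat.add_sub_cancel]
    refine delta_eq_delta_last_of_strictMonoOn hinc hδ ?_ (hEn m hm)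
    have := hE (m - 1) m
    split_ifs <;> omega

lemma exists_chain_of_strictAntiOn
    (hinc : ∀ a b : ℕ, a < b → b ≤ n → bval (ε a) < bval (ε b))
    (hδ : StrictAntiOn (fun i => delta (ε i) (ε (i + 1))) (Set.Iio n))
    {I : Finset ℕ} (hI : I ⊆ range n) :
    ∃ g : ℕ → ℕ, (∀ a b : ℕ, a < b → b ≤ #I → g a < g b) ∧ g #I ≤ n ∧
      (range #I).image (fun m => delta (ε (g m)) (ε (g (m + 1)))) =
        I.image fun i => delta (ε i) (ε (i + 1)) := by
  set E := Nat.nth (· ∈ I)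
  have hEn : ∀ m < #I, E m < n := fun m hm => mem_range.1 <| hI <| nth_mem_of_lt_card hm
  have hE : ∀ a b, a < b → b < #I → E a < E b := fun a b hab hb =>
    I.strictMonoOn_nth (hab.trans hb) hb hab
  refine ⟨fun m => if m < #I then E m else n, fun a b hab hb => ?_, by simp, ?_⟩
  · have := hE a b
    have := hEn a
    dsimp only
    split_ifs <;> omega
  · conv_rhs => rw [← I.image_nth_range_card, image_image]
    refine image_congr fun m hm => ?_
    rw [coe_range, Set.mem_Iio] at hm
    simp only [Function.comp_apply, if_pos hm]
    refine delta_eq_delta_first_of_strictAntiOn hinc hδ ?_ ?_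
    · have := hE m (m + 1)
      have := hEn m hm
      split_ifs <;> omega
    · split_ifs with h
      exacts [(hEn (m + 1) h).le, le_rfl]

lemma exists_chain_of_deltaMonotone
    (hinc : ∀ a b : ℕ, a < b → b ≤ n → bval (ε a) < bval (ε b))
    (hmono : DeltaMonotone ε n) {I : Finset ℕ} (hI : I ⊆ range n) :
    ∃ g : ℕ → ℕ, (∀ a b : ℕ, a < b → b ≤ #I → g a < g b) ∧ g #I ≤ n ∧
      (range #I).image (fun m => delta (ε (g m)) (ε (g (m + 1)))) =
        I.image fun i => delta (ε i) (ε (i + 1)) :=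
  hmono.strictMonoOn_or_strictAntiOn.elim (exists_chain_of_strictMonoOn hinc · hI)
    (exists_chain_of_strictAntiOn hinc · hI)

end Chain

theorem stepup_monotone_monochromatic_general {N ℓ : ℕ} (k n : ℕ)
    (φ : Finset ℕ → Fin ℓ) (j : Fin ℓ)
    (ε : ℕ → (Fin N → Bool))
    (hinc : ∀ a b : ℕ, a < b → b ≤ n → bval (ε a) < bval (ε b))
    (hmono : DeltaMonotone ε n)
    (hC : ∀ g : ℕ → ℕ, (∀ a b : ℕ, a < b → b ≤ k → g a < g b) → g k ≤ n →
      φ ((Finset.range k).image fun i => delta (ε (g i)) (ε (g (i + 1)))) = j) :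
    ((Finset.range n).image fun i => delta (ε i) (ε (i + 1))).card = n ∧
      ∀ T : Finset ℕ, T ⊆ (Finset.range n).image (fun i => delta (ε i) (ε (i + 1))) →
        T.card = k →
        (φ T = j ∧
          ∃ g : ℕ → ℕ, (∀ a b : ℕ, a < b → b ≤ k → g a < g b) ∧ g k ≤ n ∧
            T = (Finset.range k).image fun i => delta (ε (g i)) (ε (g (i + 1)))) := by
  refine ⟨by rw [card_image_of_injOn hmono.injOn, card_range], fun T hT hTk => ?_⟩
  obtain ⟨I, hI, rfl⟩ := subset_image_iff.1 hT
  rw [card_image_of_injOn (hmono.injOn.mono hI)] at hTk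
  subst hTk
  obtain ⟨g, hg, hgn, hgI⟩ := exists_chain_of_deltaMonotone hinc hmono hI
  exact ⟨hgI ▸ hC g hg hgn, g, hg, hgn, hgI.symm⟩

/-- If `ε 0 < ⋯ < ε n` is a monochromatic set in color `j` under the step-up coloring `C`
(whose tuples all have monotone `δ`-sequences, on which `C` is given by `φ` of the `δ`-set),
then the set `{δ₁, …, δ_n}` of consecutive `δ`'s is a monochromatic `n`-set in color `j`
under `φ`. -/
theorem stepup_monotone_monochromatic {N ℓ : ℕ} (k n : ℕ) (hk : 1 ≤ k) (hkn : k ≤ n)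
    (φ : Finset ℕ → Fin ℓ) (j : Fin ℓ)
    (ε : ℕ → (Fin N → Bool))
    (hinc : ∀ a b : ℕ, a < b → b ≤ n → bval (ε a) < bval (ε b))
    (hmono : DeltaMonotone ε n)
    (hC : ∀ g : ℕ → ℕ, (∀ a b : ℕ, a < b → b ≤ k → g a < g b) → g k ≤ n →
      φ ((Finset.range k).image fun i => delta (ε (g i)) (ε (g (i + 1)))) = j) :
    ((Finset.range n).image fun i => delta (ε i) (ε (i + 1))).card = n ∧
      ∀ T : Finset ℕ, T ⊆ (Finset.range n).image (fun i => delta (ε i) (ε (i + 1))) →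
        T.card = k →
        (φ T = j ∧
          ∃ g : ℕ → ℕ, (∀ a b : ℕ, a < b → b ≤ k → g a < g b) ∧ g k ≤ n ∧
            T = (Finset.range k).image fun i => delta (ε (g i)) (ε (g (i + 1)))) :=
  stepup_monotone_monochromatic_general k n φ j ε hinc hmono hC
end

section
/- For every n > 2, there exists a 2-coloring of the pairs of a set of size ⌊2^{n/2}⌋ with no monochromatic set of size n; that is, 2^{n/2} ↛ (n)^2. -/
/-- `NoMono N k ℓ n` is the negative partition relation `N ↛ (n)_ℓ^k`:
there is an `ℓ`-coloring of the `k`-subsets of an `N`-set such that no `n`-set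
is monochromatic (i.e. every `n`-set contains two `k`-subsets of different colors). -/
def NoMono (N k ℓ n : ℕ) : Prop :=
  ∃ c : Finset (Fin N) → Fin ℓ, ∀ S : Finset (Fin N), S.card = n →
    ∃ T₁ T₂ : Finset (Fin N), T₁ ⊆ S ∧ T₂ ⊆ S ∧ T₁.card = k ∧ T₂.card = k ∧ c T₁ ≠ c T₂

/-!
Erdős' counting argument. Of the `ℓ ^ D` colourings of the subsets of an `N`-set, those
making the `k`-subsets of a fixed `n`-set all of one fixed colour are a fraction
`ℓ ^ (-C(n, k))`, so if `ℓ * C(N, n) < ℓ ^ C(n, k)` some colouring leaves no `n`-set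
monochromatic. For `k = ℓ = 2` and `N = ⌊2 ^ (n / 2)⌋ = ⌊√(2 ^ n)⌋`, squaring and using
`C(N, n) * n! ≤ N ^ n` reduces this to `2 ^ (n + 2) < (n!) ^ 2`, which holds for `n ≥ 3`.
-/

open Finset
open scoped Nat

theorem card_filter_forall_mem_eq_mul_pow {α β : Type*} [Fintype α] [DecidableEq α]
    [Fintype β] [DecidableEq β] (A : Finset α) (b : β) :
    #{f : α → β | ∀ a ∈ A, f a = b} * Fintype.card β ^ #A = Fintype.card β ^ Fintype.card α := by
  have hpi : ({f : α → β | ∀ a ∈ A, f a = b} : Finset (α → β)) =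
      Fintype.piFinset fun a => if a ∈ A then {b} else univ := by
    ext f
    simp only [mem_filter, mem_univ, true_and, Fintype.mem_piFinset]
    refine forall_congr' fun a => ?_
    split_ifs <;> simp [*]
  simp only [hpi, Fintype.card_piFinset, apply_ite card, card_singleton, prod_ite, prod_const_one,
    one_mul, prod_const, filter_not, filter_mem_eq_inter, univ_inter, ← compl_eq_univ_sdiff]
  rw [card_univ, ← pow_add, card_compl_add_card]

theorem noMono_of_mul_choose_lt {N k ℓ n : ℕ} (hkn : k ≤ n)
    (h : ℓ * N.choose n < ℓ ^ n.choose k) : NoMono N k ℓ n := by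
  have hℓ : 0 < ℓ := Nat.pos_of_ne_zero <| by rintro rfl; simp [(Nat.choose_pos hkn).ne'] at h
  by_contra hmono
  simp only [NoMono, not_exists, not_forall, not_and, ne_eq, not_not, exists_prop] at hmono
  set D := Fintype.card (Finset (Fin N))
  have hcover : (univ : Finset (Finset (Fin N) → Fin ℓ)) ⊆
      (powersetCard n univ ×ˢ univ).biUnion fun p : Finset (Fin N) × Fin ℓ =>
        {c | ∀ T ∈ powersetCard k p.1, c T = p.2} := by
    intro c _
    obtain ⟨S, hS, hc⟩ := hmono c
    obtain ⟨T₀, hT₀⟩ := powersetCard_nonempty.2 (hS ▸ hkn)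
    rw [mem_powersetCard] at hT₀
    simp only [mem_biUnion, mem_product, mem_powersetCard, mem_filter, mem_univ, subset_univ,
      true_and, and_true]
    exact ⟨(S, c T₀), hS, fun T hT => hc T T₀ hT.1 hT₀.1 hT.2 hT₀.2⟩
  have hcount : ℓ ^ D * ℓ ^ n.choose k ≤ ℓ ^ D * (ℓ * N.choose n) := by
    calc ℓ ^ D * ℓ ^ n.choose k
        ≤ (∑ p ∈ powersetCard n univ ×ˢ univ,
            #({c | ∀ T ∈ powersetCard k p.1, c T = p.2} : Finset (Finset (Fin N) → Fin ℓ))) *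
            ℓ ^ n.choose k := by
          gcongr
          simpa [D] using (card_le_card hcover).trans card_biUnion_le
      _ = ∑ p ∈ powersetCard n (univ : Finset (Fin N)) ×ˢ (univ : Finset (Fin ℓ)), ℓ ^ D := by
          rw [sum_mul]
          refine sum_congr rfl fun p hp => ?_
          rw [mem_product, mem_powersetCard] at hp
          have := card_filter_forall_mem_eq_mul_pow (β := Fin ℓ) (powersetCard k p.1) p.2
          rwa [card_powersetCard, hp.1.2, Fintype.card_fin] at this
      _ = ℓ ^ D * (ℓ * N.choose n) := by simp [mul_comm]
  exact h.not_ge (Nat.le_of_mul_le_mul_left hcount (pow_pos hℓ D))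

theorem two_pow_add_two_lt_factorial_sq {n : ℕ} (hn : 3 ≤ n) : 2 ^ (n + 2) < n ! ^ 2 := by
  induction n, hn using Nat.le_induction with
  | base => decide
  | succ m hm ih =>
    calc 2 ^ (m + 1 + 2) = 2 * 2 ^ (m + 2) := by ring
      _ < 4 * m ! ^ 2 := by omega
      _ ≤ (m + 1) ^ 2 * m ! ^ 2 := by gcongr; nlinarith
      _ = (m + 1)! ^ 2 := by rw [Nat.factorial_succ]; ring

theorem two_mul_choose_lt_two_pow_choose_two {N n : ℕ} (hn : 3 ≤ n) (hN : N ^ 2 ≤ 2 ^ n) :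
    2 * N.choose n < 2 ^ n.choose 2 := by
  have hq : 2 * n.choose 2 + n = n * n := by
    rcases n with _ | m
    · rfl
    · rw [Nat.choose_two_right, Nat.mul_div_cancel' (Nat.even_mul_pred_self _).two_dvd,
        Nat.add_sub_cancel]
      ring
  refine lt_of_pow_lt_pow_left₀ 2 (by positivity)
    (lt_of_mul_lt_mul_right ?_ (Nat.zero_le (n ! ^ 2)))
  calc (2 * N.choose n) ^ 2 * n ! ^ 2 = 4 * (n ! * N.choose n) ^ 2 := by ring
    _ ≤ 4 * (N ^ n) ^ 2 := by
      rw [← Nat.descFactorial_eq_factorial_mul_choose]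
      gcongr
      exact Nat.descFactorial_le_pow N n
    _ = 4 * (N ^ 2) ^ n := by ring
    _ ≤ 4 * (2 ^ n) ^ n := by gcongr
    _ = 2 ^ (2 * n.choose 2) * 2 ^ (n + 2) := by rw [← pow_mul, ← pow_add, ← hq]; ring
    _ < 2 ^ (2 * n.choose 2) * n ! ^ 2 := by gcongr; exact two_pow_add_two_lt_factorial_sq hn
    _ = (2 ^ n.choose 2) ^ 2 * n ! ^ 2 := by ring

theorem floor_two_rpow_half_eq_sqrt (n : ℕ) : ⌊(2 : ℝ) ^ ((n : ℝ) / 2)⌋₊ = Nat.sqrt (2 ^ n) := by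
  rw [← Real.nat_floor_real_sqrt_eq_nat_sqrt, Real.sqrt_eq_rpow, Nat.cast_pow, Nat.cast_ofNat,
    ← Real.rpow_natCast, ← Real.rpow_mul zero_le_two, mul_one_div]

/-- The Erdős lower bound for graph Ramsey numbers: `2^{n/2} ↛ (n)^2` for `n > 2`. -/
theorem erdos_lower_bound (n : ℕ) (hn : 2 < n) :
    NoMono (⌊(2 : ℝ) ^ ((n : ℝ) / 2)⌋₊) 2 2 n := by
  refine noMono_of_mul_choose_lt hn.le (two_mul_choose_lt_two_pow_choose_two hn ?_)
  rw [floor_two_rpow_half_eq_sqrt]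
  exact Nat.sqrt_le' _
end
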